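/- arXiv:2409.02052 — 2 statements merged into one kernel-verified Lean document; each statement's English description precedes it below -/
import Mathlib

section
/- Let m be a positive integer and let a_1,…,a_m and b_1,…,b_m be real numbers such that a_l = 0 and b_l = 0 whenever l is even. Define f(θ) = ∑_{l=1}^m ( a_l·cos(π l θ) + b_l·sin(π l θ) ). Then for every odd positive integer r ≤ m and every s ∈ {−1, 1}, ∫_{−1}^{1} f(θ)·max(s·cos(π r θ), 0) dθ = s·a_r/2. -/
open Real MeasureTheory intervalIntegral

/-!
For `s = ±1` we have `max (s t) 0 = (s t + |t|) / 2`, which splits the integral in two. Against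
`s cos (π r θ)`, orthogonality of the trigonometric system on `[-1, 1]` extracts `s a_r`. Against
`|cos (π r θ)|` the integral vanishes: having only odd frequencies, `f` is antiperiodic with
antiperiod `1`, while `|cos (π r θ)|` is `1`-periodic, so the product is antiperiodic and integrates
to zero over an interval of length `2`.
-/

namespace Function

theorem Antiperiodic.mul_periodic {α β : Type*} [Add α] [Mul β] [HasDistribNeg β]
    {f g : α → β} {c : α} (hf : Antiperiodic f c) (hg : Periodic g c) :
    Antiperiodic (f * g) c := fun x => by
  simp [hf x, hg x]

variable {E : Type*} [NormedAddCommGroup E] [NormedSpace ℝ E] {g : ℝ → E}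

theorem Odd.intervalIntegral_eq_zero (hg : g.Odd) (a : ℝ) :
    ∫ x in -a..a, g x = 0 := by
  have h : ∫ x in -a..a, g x = -∫ x in -a..a, g x := by
    conv_lhs => rw [← neg_neg a, ← integral_comp_neg]
    simp only [hg _, intervalIntegral.integral_neg, neg_neg]
  simpa [eq_neg_iff_add_eq_zero, ← two_smul ℝ] using h

theorem Antiperiodic.intervalIntegral_eq_zero {c : ℝ} (hg : Antiperiodic g c) (a : ℝ)
    (hint : IntervalIntegrable g volume a (a + c)) : ∫ x in a..a + 2 * c, g x = 0 := by
  have hshift : (fun x => g (x + c)) = fun x => -g x := funext hg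
  have hint' : IntervalIntegrable g volume (a + c) (a + 2 * c) := by
    rw [show a + 2 * c = a + c + c by ring]
    convert (hint.comp_sub_right c).neg using 1
    ext x
    simp [← hg (x - c)]
  have hsecond : ∫ x in a + c..a + 2 * c, g x = -∫ x in a..a + c, g x := by
    rw [show a + 2 * c = a + c + c by ring, ← integral_comp_add_right, hshift,
      intervalIntegral.integral_neg]
  rw [← integral_add_adjacent_intervals hint hint', hsecond, add_neg_cancel]

end Function

theorem max_mul_zero_eq_of_abs_eq_one {s : ℝ} (hs : |s| = 1) (t : ℝ) :
    max (s * t) 0 = (s * t + |t|) / 2 := by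
  have h := add_abs_eq_two_nsmul_posPart (s * t)
  rw [abs_mul, hs, one_mul, two_nsmul] at h
  rw [h, posPart_def]
  ring

theorem antiperiodic_cos_pi_mul_of_odd {l : ℕ} (hl : Odd l) :
    Function.Antiperiodic (fun θ => cos (π * l * θ)) 1 := fun θ => by
  dsimp only
  rw [show π * l * (θ + 1) = π * l * θ + l * π by ring, cos_add_nat_mul_pi, hl.neg_one_pow,
    neg_one_mul]

theorem antiperiodic_sin_pi_mul_of_odd {l : ℕ} (hl : Odd l) :
    Function.Antiperiodic (fun θ => sin (π * l * θ)) 1 := fun θ => by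
  dsimp only
  rw [show π * l * (θ + 1) = π * l * θ + l * π by ring, sin_add_nat_mul_pi, hl.neg_one_pow,
    neg_one_mul]

theorem periodic_abs_cos_pi_mul (r : ℕ) :
    Function.Periodic (fun θ => |cos (π * r * θ)|) 1 := fun θ => by
  dsimp only
  rw [show π * r * (θ + 1) = π * r * θ + r * π by ring, cos_add_nat_mul_pi, abs_mul,
    abs_neg_one_pow, one_mul]

theorem integral_cos_pi_int_mul (k : ℤ) :
    ∫ θ in (-1 : ℝ)..1, cos (π * k * θ) = if k = 0 then 2 else 0 := by
  split_ifs with hk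
  · norm_num [hk]
  · have hπk : π * k ≠ 0 := mul_ne_zero pi_ne_zero (by exact_mod_cast hk)
    rw [integral_comp_mul_left (fun x => cos x) hπk, integral_cos, mul_neg, mul_one, sin_neg,
      mul_comm, sin_int_mul_pi]
    simp

theorem integral_cos_mul_cos_pi_mul (l : ℕ) {r : ℕ} (hr : r ≠ 0) :
    ∫ θ in (-1 : ℝ)..1, cos (π * l * θ) * cos (π * r * θ) = if l = r then 1 else 0 := by
  have hprod : ∀ θ, cos (π * l * θ) * cos (π * r * θ)
      = (cos (π * ((l - r : ℤ) : ℝ) * θ) + cos (π * ((l + r : ℤ) : ℝ) * θ)) / 2 := fun θ => by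
    push_cast
    rw [show π * (l - r) * θ = π * l * θ - π * r * θ by ring,
      show π * (l + r) * θ = π * l * θ + π * r * θ by ring, cos_sub, cos_add]
    ring
  simp only [hprod]
  rw [intervalIntegral.integral_div,
    intervalIntegral.integral_add (Continuous.intervalIntegrable (by fun_prop) _ _)
      (Continuous.intervalIntegrable (by fun_prop) _ _), integral_cos_pi_int_mul, integral_cos_pi_int_mul]
  split_ifs <;> norm_num <;> omega

theorem integral_sin_mul_cos_pi_mul (l r : ℕ) :
    ∫ θ in (-1 : ℝ)..1, sin (π * l * θ) * cos (π * r * θ) = 0 :=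
  Function.Odd.intervalIntegral_eq_zero (fun θ => by simp [sin_neg, cos_neg]) 1

noncomputable def trigSum (S : Finset ℕ) (a b : ℕ → ℝ) (θ : ℝ) : ℝ :=
  ∑ l ∈ S, (a l * cos (π * l * θ) + b l * sin (π * l * θ))

namespace trigSum

variable {S : Finset ℕ} {a b : ℕ → ℝ}

@[fun_prop]
theorem continuous : Continuous (trigSum S a b) := by
  unfold trigSum
  fun_prop

theorem antiperiodic_of_coeff_even_eq_zero (h : ∀ l ∈ S, Even l → a l = 0 ∧ b l = 0) :
    Function.Antiperiodic (trigSum S a b) 1 := fun θ => by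
  simp only [trigSum, ← Finset.sum_neg_distrib]
  refine Finset.sum_congr rfl fun l hl => ?_
  rcases Nat.even_or_odd l with he | ho
  · simp [h l hl he]
  · simp only [antiperiodic_cos_pi_mul_of_odd ho θ, antiperiodic_sin_pi_mul_of_odd ho θ]
    ring

theorem integral_mul_cos {r : ℕ} (hr : r ≠ 0) (hrS : r ∈ S) :
    ∫ θ in (-1 : ℝ)..1, trigSum S a b θ * cos (π * r * θ) = a r := by
  have hterm : ∀ l, ∫ θ in (-1 : ℝ)..1,
      (a l * cos (π * l * θ) + b l * sin (π * l * θ)) * cos (π * r * θ)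
        = if l = r then a l else 0 := fun l => by
    have hexpand : ∀ θ, (a l * cos (π * l * θ) + b l * sin (π * l * θ)) * cos (π * r * θ)
        = a l * (cos (π * l * θ) * cos (π * r * θ))
          + b l * (sin (π * l * θ) * cos (π * r * θ)) := fun θ => by ring
    simp only [hexpand]
    rw [intervalIntegral.integral_add (Continuous.intervalIntegrable (by fun_prop) _ _)
        (Continuous.intervalIntegrable (by fun_prop) _ _),
      intervalIntegral.integral_const_mul, intervalIntegral.integral_const_mul,
      integral_cos_mul_cos_pi_mul l hr, integral_sin_mul_cos_pi_mul]
    split_ifs <;> ring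
  simp only [trigSum, Finset.sum_mul]
  rw [intervalIntegral.integral_finsetSum
      fun l _ => Continuous.intervalIntegrable (by fun_prop) _ _]
  simp [hterm, hrS]

end trigSum

theorem relu_cos_feature_correlation_general
    (m : ℕ) (a b : ℕ → ℝ)
    (hvanish : ∀ l ∈ Finset.Icc 1 m, Even l → a l = 0 ∧ b l = 0)
    (f : ℝ → ℝ)
    (hf : ∀ θ : ℝ, f θ =
      ∑ l ∈ Finset.Icc 1 m, (a l * Real.cos (π * l * θ) + b l * Real.sin (π * l * θ)))
    (r : ℕ) (hr0 : 0 < r) (hrm : r ≤ m)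
    (s : ℝ) (hs : s = 1 ∨ s = -1) :
    ∫ θ in (-1 : ℝ)..1, f θ * max (s * Real.cos (π * r * θ)) 0 = s * a r / 2 := by
  obtain rfl : f = trigSum (Finset.Icc 1 m) a b := funext hf
  have hs1 : |s| = 1 := by rcases hs with rfl | rfl <;> norm_num
  have hcos : ∫ θ in (-1 : ℝ)..1, trigSum (Finset.Icc 1 m) a b θ * cos (π * r * θ) = a r :=
    trigSum.integral_mul_cos hr0.ne' (Finset.mem_Icc.2 ⟨hr0, hrm⟩)
  have habs : ∫ θ in (-1 : ℝ)..1, trigSum (Finset.Icc 1 m) a b θ * |cos (π * r * θ)| = 0 := by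
    have h := ((trigSum.antiperiodic_of_coeff_even_eq_zero hvanish).mul_periodic
      (periodic_abs_cos_pi_mul r)).intervalIntegral_eq_zero (-1)
      (Continuous.intervalIntegrable (by fun_prop) _ _)
    norm_num at h
    exact h
  calc ∫ θ in (-1 : ℝ)..1, trigSum (Finset.Icc 1 m) a b θ * max (s * cos (π * r * θ)) 0
      = ∫ θ in (-1 : ℝ)..1, s / 2 * (trigSum (Finset.Icc 1 m) a b θ * cos (π * r * θ))
          + 1 / 2 * (trigSum (Finset.Icc 1 m) a b θ * |cos (π * r * θ)|) := by
        congr 1 with θ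
        rw [max_mul_zero_eq_of_abs_eq_one hs1]
        ring
    _ = s * a r / 2 := by
        rw [intervalIntegral.integral_add (Continuous.intervalIntegrable (by fun_prop) _ _)
            (Continuous.intervalIntegrable (by fun_prop) _ _),
          intervalIntegral.integral_const_mul, intervalIntegral.integral_const_mul, hcos, habs]
        ring

/-- Correlation of a trigonometric polynomial supported on odd frequencies with a
sign-flipped ReLU cosine feature: for odd `r ≤ m` and `s ∈ {−1,1}`,
`∫_{−1}^{1} f(θ) · max(s·cos(π r θ), 0) dθ = s · a_r / 2`. -/
theorem relu_cos_feature_correlation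
    (m : ℕ) (hm : 0 < m) (a b : ℕ → ℝ)
    (hvanish : ∀ l ∈ Finset.Icc 1 m, Even l → a l = 0 ∧ b l = 0)
    (f : ℝ → ℝ)
    (hf : ∀ θ : ℝ, f θ =
      ∑ l ∈ Finset.Icc 1 m, (a l * Real.cos (π * l * θ) + b l * Real.sin (π * l * θ)))
    (r : ℕ) (hr : Odd r) (hr0 : 0 < r) (hrm : r ≤ m)
    (s : ℝ) (hs : s = 1 ∨ s = -1) :
    ∫ θ in (-1 : ℝ)..1, f θ * max (s * Real.cos (π * r * θ)) 0 = s * a r / 2 :=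
  relu_cos_feature_correlation_general m a b hvanish f hf r hr0 hrm s hs
end

section
/- Let h : [−1, 1] → ℝ be continuous and let a be a positive integer. Then ∫_{−1}^{1} h(sin(π a θ))·sin(π a θ) dθ = (2/π)·∫_{−1}^{1} x·h(x)/√(1 − x²) dx. -/
open Real MeasureTheory

/-! As a function of `t = π a θ` the integrand is `2π`-periodic, so the dilation by `a` does not
change its integral over a period. Since `sin (π - t) = sin t`, the integral over `[-π, π]` is
twice the one over `[-π/2, π/2]`, where `x = sin t` is a bijection onto `(-1, 1)` with
`dt = dx / √(1 - x²)`. -/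

theorem Function.Periodic.intervalIntegral_comp_nat_mul {E : Type*} [NormedAddCommGroup E]
    [NormedSpace ℝ E] {f : ℝ → E} {T : ℝ} (hf : Periodic f T)
    (h_int : ∀ t₁ t₂, IntervalIntegrable f volume t₁ t₂) {n : ℕ} (hn : n ≠ 0) (t : ℝ) :
    ∫ x in t..t + T, f (n * x) = ∫ x in t..t + T, f x := by
  have hn' : (n : ℝ) ≠ 0 := Nat.cast_ne_zero.2 hn
  have h_end : (n : ℝ) * (t + T) = n * t + (n : ℤ) • T := by
    rw [zsmul_eq_mul]; push_cast; ring
  rw [intervalIntegral.integral_comp_mul_left f hn', h_end,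
    hf.intervalIntegral_add_zsmul_eq n _ h_int, hf.intervalIntegral_add_eq (n * t) t,
    ← Int.cast_smul_eq_zsmul ℝ, Int.cast_natCast, inv_smul_smul₀ hn']

theorem ContinuousOn.comp_sin {E : Type*} [TopologicalSpace E] {φ : ℝ → E}
    (hφ : ContinuousOn φ (Set.Icc (-1) 1)) : Continuous fun t => φ (sin t) :=
  hφ.comp_continuous continuous_sin fun t => ⟨neg_one_le_sin t, sin_le_one t⟩

theorem integral_comp_sin_neg_pi_pi {E : Type*} [NormedAddCommGroup E] [NormedSpace ℝ E]
    {φ : ℝ → E} (hφ : ContinuousOn φ (Set.Icc (-1) 1)) :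
    ∫ t in -π..π, φ (sin t) = (2 : ℝ) • ∫ t in -(π / 2)..(π / 2), φ (sin t) := by
  have hcont : Continuous fun t => φ (sin t) := hφ.comp_sin
  have hper : Function.Periodic (fun t => φ (sin t)) (2 * π) := sin_periodic.comp φ
  have h_reflect :
      ∫ t in (π / 2)..(π / 2 + π), φ (sin t) = ∫ t in -(π / 2)..(π / 2), φ (sin t) := by
    have := intervalIntegral.integral_comp_sub_left (fun t => φ (sin t)) π
      (a := -(π / 2)) (b := π / 2)
    simp only [sin_pi_sub] at this
    rw [this]; congr 1 <;> ring
  calc ∫ t in -π..π, φ (sin t)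
      = ∫ t in -(π / 2)..(π / 2 + π), φ (sin t) := by
        have := hper.intervalIntegral_add_eq (-π) (-(π / 2))
        convert this using 2 <;> ring
    _ = (∫ t in -(π / 2)..(π / 2), φ (sin t)) + ∫ t in (π / 2)..(π / 2 + π), φ (sin t) :=
        (intervalIntegral.integral_add_adjacent_intervals
          (hcont.intervalIntegrable _ _) (hcont.intervalIntegrable _ _)).symm
    _ = (2 : ℝ) • ∫ t in -(π / 2)..(π / 2), φ (sin t) := by rw [h_reflect, two_smul]

theorem integral_div_sqrt_one_sub_sq_eq_integral_comp_sin (ψ : ℝ → ℝ) :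
    ∫ x in (-1 : ℝ)..1, ψ x / √(1 - x ^ 2) = ∫ t in -(π / 2)..(π / 2), ψ (sin t) := by
  have h_cov := integral_image_eq_integral_abs_deriv_smul measurableSet_Ioo
    (fun t _ => (hasDerivAt_sin t).hasDerivWithinAt) sinPartialHomeomorph.injOn
    (fun x => ψ x / √(1 - x ^ 2))
  have h_img : sin '' Set.Ioo (-(π / 2)) (π / 2) = Set.Ioo (-1) 1 :=
    sinPartialHomeomorph.image_source_eq_target
  rw [h_img] at h_cov
  have h_jac : ∀ t ∈ Set.Ioo (-(π / 2)) (π / 2),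
      |cos t| • (ψ (sin t) / √(1 - sin t ^ 2)) = ψ (sin t) := by
    intro t ht
    rw [← cos_sq', sqrt_sq_eq_abs, smul_eq_mul,
      mul_div_cancel₀ _ (abs_ne_zero.2 (cos_pos_of_mem_Ioo ht).ne')]
  rw [intervalIntegral.integral_of_le (by norm_num), integral_Ioc_eq_integral_Ioo,
    intervalIntegral.integral_of_le (by linarith [pi_pos]), integral_Ioc_eq_integral_Ioo]
  exact h_cov.trans (setIntegral_congr_fun measurableSet_Ioo h_jac)

/-- Chebyshev coefficient extraction for sine features: for continuous `h` on `[−1,1]`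
and a positive integer `a`,
`∫_{−1}^{1} h(sin(π a θ))·sin(π a θ) dθ = (2/π)·∫_{−1}^{1} x·h(x)/√(1−x²) dx`. -/
theorem coefficient_extraction_sin
    (h : ℝ → ℝ) (hh : ContinuousOn h (Set.Icc (-1 : ℝ) 1)) (a : ℕ) (ha : 0 < a) :
    ∫ θ in (-1 : ℝ)..1, h (Real.sin (π * a * θ)) * Real.sin (π * a * θ)
      = (2 / π) * ∫ x in (-1 : ℝ)..1, x * h x / Real.sqrt (1 - x ^ 2) := by
  set g : ℝ → ℝ := fun t => h (sin t) * sin t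
  have hg : ContinuousOn (fun y => h y * y) (Set.Icc (-1) 1) := hh.mul continuousOn_id
  have hper : Function.Periodic g (2 * π) := sin_periodic.comp fun y => h y * y
  have h_int : ∀ t₁ t₂, IntervalIntegrable g volume t₁ t₂ := fun _ _ =>
    hg.comp_sin.intervalIntegrable _ _
  calc ∫ θ in (-1 : ℝ)..1, h (sin (π * a * θ)) * sin (π * a * θ)
      = ∫ θ in (-1 : ℝ)..1, g (a * (π * θ)) := by
        simp only [g, ← mul_assoc, mul_comm (a : ℝ) π]
    _ = π⁻¹ * ∫ t in -π..-π + 2 * π, g (a * t) := by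
        rw [intervalIntegral.integral_comp_mul_left (fun t => g (a * t)) pi_ne_zero, smul_eq_mul]
        congr 2 <;> ring
    _ = π⁻¹ * ∫ t in -π..π, g t := by
        rw [hper.intervalIntegral_comp_nat_mul h_int ha.ne']; congr 2; ring
    _ = (2 / π) * ∫ t in -(π / 2)..(π / 2), sin t * h (sin t) := by
        rw [integral_comp_sin_neg_pi_pi hg, smul_eq_mul]; simp only [mul_comm]; ring
    _ = (2 / π) * ∫ x in (-1 : ℝ)..1, x * h x / Real.sqrt (1 - x ^ 2) := by
        rw [integral_div_sqrt_one_sub_sq_eq_integral_comp_sin fun x => x * h x]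
end
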